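/- For any positive integers a_1 < a_2 < ... < a_n and F = {{0,a_1}, ..., {0,a_n}}, we have π(F) ≤ n/(n+1). Consequently M = sup over families of n 2-ships of π equals n/(n+1). -/

import Mathlib

/-- A shooting pattern `X` hits a ship `S` if every translate of `S` intersects `X`. -/
def Hits (X S : Set ℤ) : Prop := ∀ n : ℤ, ∃ s ∈ S, n + s ∈ X

/-- Lower asymptotic density of a set of integers. -/
noncomputable def lowerDensity (X : Set ℤ) : ℝ :=
  Filter.liminf (fun N : ℕ =>
    ((X ∩ Set.Icc (-(N:ℤ)) (N:ℤ)).ncard : ℝ) / (2 * N + 1)) Filter.atTop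

/-- Optimal piercing density of a family of ships. -/
noncomputable def piercing (F : Set (Set ℤ)) : ℝ :=
  sInf (lowerDensity '' {X | ∀ S ∈ F, Hits X S})

/-!
Greedy upper bound: scan `ℕ` in increasing order and leave a cell empty unless it equals
`s + b i` for an earlier empty cell `s`. The empty cells contain no two points at distance
`b i`, so the complement hits every `{0, b i}`, and each of the other cells is one of the
`card ι` translates of an empty cell, whence at least a `1 / (card ι + 1)` fraction of every
initial segment is empty. Mirroring this set to the negative integers (with a gap larger than
every `b i`) gives a hitting set of lower density at most `card ι / (card ι + 1)`.

Sharpness: if `X` hits `{0, k}` for all `1 ≤ k ≤ n`, any two cells missed by `X` are more than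
`n` apart, so `X` has lower density at least `n / (n + 1)`.
-/

open Filter Topology Set

lemma hits_pair_iff {X : Set ℤ} {d : ℤ} : Hits X {0, d} ↔ ∀ t ∉ X, t + d ∈ X := by
  refine ⟨fun h t ht => ?_, fun h t => ?_⟩
  · obtain ⟨s, rfl | rfl, hs⟩ := h t
    · exact absurd (by simpa using hs) ht
    · exact hs
  · by_cases ht : t ∈ X
    · exact ⟨0, by simp, by simpa using ht⟩
    · exact ⟨d, by simp, h t ht⟩

lemma Hits.image_add {X S : Set ℤ} (h : Hits X S) (c : ℤ) : Hits X ((c + ·) '' S) := by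
  intro t
  obtain ⟨s, hs, hts⟩ := h (t + c)
  exact ⟨c + s, mem_image_of_mem _ hs, by rwa [← add_assoc]⟩

lemma ncard_Icc_neg_self (N : ℕ) : (Icc (-(N:ℤ)) N).ncard = 2 * N + 1 := by
  rw [← Finset.coe_Icc, ncard_coe_finset, Int.card_Icc]
  omega

lemma ncard_inter_Icc_add_ncard_compl_inter_Icc (X : Set ℤ) (N : ℕ) :
    (X ∩ Icc (-(N:ℤ)) N).ncard + (Xᶜ ∩ Icc (-(N:ℤ)) N).ncard = 2 * N + 1 := by
  rw [← ncard_Icc_neg_self, ← ncard_inter_add_ncard_sdiff_eq_ncard _ X (finite_Icc _ _),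
    inter_comm, sdiff_eq_compl_inter]

lemma density_ratio_nonneg (X : Set ℤ) (N : ℕ) :
    0 ≤ ((X ∩ Icc (-(N:ℤ)) N).ncard : ℝ) / (2 * N + 1) := by
  positivity

lemma density_ratio_le_one (X : Set ℤ) (N : ℕ) :
    ((X ∩ Icc (-(N:ℤ)) N).ncard : ℝ) / (2 * N + 1) ≤ 1 := by
  rw [div_le_one (by positivity)]
  exact_mod_cast ncard_Icc_neg_self N ▸ ncard_le_ncard inter_subset_right (finite_Icc _ _)

lemma tendsto_add_div_two_mul_add_one (α C : ℝ) :
    Tendsto (fun N : ℕ => α + C / (2 * N + 1)) atTop (𝓝 α) := by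
  have h : Tendsto (fun N : ℕ => 2 * (N : ℝ) + 1) atTop atTop :=
    tendsto_atTop_add_const_right _ _
      ((tendsto_natCast_atTop_atTop (R := ℝ)).const_mul_atTop two_pos)
  simpa using tendsto_const_nhds.add (tendsto_const_nhds.div_atTop h)

lemma lowerDensity_le_of_eventually {X : Set ℤ} {α C : ℝ}
    (h : ∀ᶠ N : ℕ in atTop, ((X ∩ Icc (-(N:ℤ)) N).ncard : ℝ) ≤ α * (2 * N + 1) + C) :
    lowerDensity X ≤ α := by
  rw [← (tendsto_add_div_two_mul_add_one α C).liminf_eq]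
  refine liminf_le_liminf (h.mono fun N hN => ?_)
    (isBoundedUnder_of ⟨0, density_ratio_nonneg X⟩)
    (tendsto_add_div_two_mul_add_one α C).isCoboundedUnder_ge
  rw [div_le_iff₀ (by positivity), add_mul, div_mul_cancel₀ _ (by positivity)]
  exact hN

lemma le_lowerDensity_of_eventually {X : Set ℤ} {α C : ℝ}
    (h : ∀ᶠ N : ℕ in atTop, α * (2 * N + 1) - C ≤ ((X ∩ Icc (-(N:ℤ)) N).ncard : ℝ)) :
    α ≤ lowerDensity X := by
  rw [← (tendsto_add_div_two_mul_add_one α (-C)).liminf_eq]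
  refine liminf_le_liminf (h.mono fun N hN => ?_)
    (tendsto_add_div_two_mul_add_one α (-C)).isBoundedUnder_ge
    (isBoundedUnder_of ⟨1, density_ratio_le_one X⟩).isCoboundedUnder_ge
  rw [le_div_iff₀ (by positivity), add_mul, div_mul_cancel₀ _ (by positivity)]
  linarith

lemma lowerDensity_nonneg (X : Set ℤ) : 0 ≤ lowerDensity X :=
  le_lowerDensity_of_eventually (C := 0) (Eventually.of_forall fun N => by simp)

lemma piercing_le_lowerDensity {F : Set (Set ℤ)} {X : Set ℤ} (hX : ∀ S ∈ F, Hits X S) :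
    piercing F ≤ lowerDensity X :=
  csInf_le ⟨0, by rintro _ ⟨Z, _, rfl⟩; exact lowerDensity_nonneg Z⟩ (mem_image_of_mem _ hX)

lemma le_piercing {F : Set (Set ℤ)} {L : ℝ} (hF : ∀ S ∈ F, S.Nonempty)
    (h : ∀ X, (∀ S ∈ F, Hits X S) → L ≤ lowerDensity X) : L ≤ piercing F := by
  refine le_csInf ⟨_, univ, fun S hS t => ?_, rfl⟩ ?_
  · obtain ⟨s, hs⟩ := hF S hS
    exact ⟨s, hs, trivial⟩
  · rintro _ ⟨X, hX, rfl⟩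
    exact h X hX

section Greedy

variable {ι : Type*} (b : ι → ℤ)

def GreedyEmpty (t : ℕ) : Prop :=
  ∀ s < t, GreedyEmpty s → ∀ i, (s : ℤ) + b i ≠ t
termination_by t

variable {b}

lemma greedyEmpty_iff {t : ℕ} :
    GreedyEmpty b t ↔ ∀ s < t, GreedyEmpty b s → ∀ i, (s : ℤ) + b i ≠ t := by
  rw [GreedyEmpty]

lemma GreedyEmpty.add_ne {s t : ℕ} {i : ι} (hs : GreedyEmpty b s) (ht : GreedyEmpty b t)
    (hb : 0 < b i) : (s : ℤ) + b i ≠ t := by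
  rcases lt_or_ge s t with hst | hst
  · exact greedyEmpty_iff.1 ht s hst hs i
  · omega

lemma exists_greedyEmpty_add_eq {t : ℕ} (h : ¬ GreedyEmpty b t) :
    ∃ s < t, GreedyEmpty b s ∧ ∃ i, (s : ℤ) + b i = t := by
  rw [greedyEmpty_iff] at h
  push Not at h
  exact h

variable (b) in
lemma le_mul_ncard_greedyEmpty [Finite ι] (M : ℕ) :
    M + 1 ≤ (Nat.card ι + 1) * ({t | GreedyEmpty b t} ∩ Iic M).ncard := by
  set G := {t | GreedyEmpty b t} ∩ Iic M
  have hcover : Iic M \ {t | GreedyEmpty b t} ⊆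
      (fun p : ℕ × ι => (p.1 + b p.2).toNat) '' (G ×ˢ univ) := by
    rintro t ⟨htM, ht⟩
    obtain ⟨s, hst, hs, i, hsi⟩ := exists_greedyEmpty_add_eq ht
    exact ⟨(s, i), ⟨⟨hs, by simp only [mem_Iic] at htM ⊢; omega⟩, trivial⟩, by simp [hsi]⟩
  have hsplit := ncard_inter_add_ncard_sdiff_eq_ncard (Iic M) {t | GreedyEmpty b t}
  have hcard := (ncard_le_ncard hcover).trans ncard_image_le
  rw [ncard_prod, ncard_univ] at hcard
  rw [ncard_Iic_nat, inter_comm] at hsplit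
  linarith

end Greedy

def twoSided (G : Set ℕ) (c : ℕ) : Set ℤ :=
  (fun t : ℕ => (t : ℤ)) '' G ∪ (fun t : ℕ => -(t : ℤ) - c) '' G

lemma add_notMem_twoSided {G : Set ℕ} {c : ℕ} {d y : ℤ} (hd : 0 < d) (hdc : d < c)
    (hG : ∀ s ∈ G, ∀ t ∈ G, (s : ℤ) + d ≠ t) (hy : y ∈ twoSided G c) :
    y + d ∉ twoSided G c := by
  rintro (⟨t, ht, hty⟩ | ⟨t, ht, hty⟩) <;> obtain ⟨s, hs, rfl⟩ | ⟨s, hs, rfl⟩ := hy <;>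
    dsimp only at hty
  · exact hG s hs t ht hty.symm
  · omega
  · omega
  · exact hG t ht s hs (by omega)

lemma ncard_add_ncard_le_ncard_twoSided_inter_Icc (G : Set ℕ) {c N : ℕ} (hc : 0 < c)
    (hcN : c ≤ N) :
    (G ∩ Iic N).ncard + (G ∩ Iic (N - c)).ncard ≤
      (twoSided G c ∩ Icc (-(N : ℤ)) N).ncard := by
  have hpos : ((fun t : ℕ => (t : ℤ)) '' (G ∩ Iic N)) ⊆ twoSided G c ∩ Icc (-(N : ℤ)) N := by
    rintro _ ⟨t, ⟨ht, htN⟩, rfl⟩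
    exact ⟨Or.inl (mem_image_of_mem _ ht), by simp only [mem_Iic] at htN; simp; omega⟩
  have hneg : ((fun t : ℕ => -(t : ℤ) - c) '' (G ∩ Iic (N - c))) ⊆
      twoSided G c ∩ Icc (-(N : ℤ)) N := by
    rintro _ ⟨t, ⟨ht, htN⟩, rfl⟩
    exact ⟨Or.inr (mem_image_of_mem _ ht), by simp only [mem_Iic] at htN; simp; omega⟩
  have hdisj : Disjoint ((fun t : ℕ => (t : ℤ)) '' (G ∩ Iic N))
      ((fun t : ℕ => -(t : ℤ) - c) '' (G ∩ Iic (N - c))) := by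
    rw [disjoint_left]
    rintro _ ⟨s, -, rfl⟩ ⟨t, -, hts⟩
    dsimp only at hts
    omega
  calc _ = ((fun t : ℕ => (t : ℤ)) '' (G ∩ Iic N) ∪
        (fun t : ℕ => -(t : ℤ) - c) '' (G ∩ Iic (N - c))).ncard := by
        rw [ncard_union_eq hdisj ((finite_Iic N).inter_of_right G |>.image _)
          ((finite_Iic _).inter_of_right G |>.image _),
          ncard_image_of_injective _ Nat.cast_injective,
          ncard_image_of_injective _ fun s t h => by simpa using h]
    _ ≤ _ := ncard_le_ncard (union_subset hpos hneg) ((finite_Icc _ _).inter_of_right _)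

theorem exists_hits_lowerDensity_le {ι : Type*} [Finite ι] (b : ι → ℤ) (hb : ∀ i, 0 < b i) :
    ∃ X, (∀ i, Hits X {0, b i}) ∧ lowerDensity X ≤ Nat.card ι / (Nat.card ι + 1) := by
  obtain ⟨c, hc, hbc⟩ : ∃ c : ℕ, 0 < c ∧ ∀ i, b i < c := by
    obtain ⟨M, hM⟩ := (finite_range b).bddAbove
    exact ⟨M.toNat + 1, by omega, fun i => by have := hM (mem_range_self i); omega⟩
  set Y := twoSided {t | GreedyEmpty b t} c
  refine ⟨Yᶜ, fun i => hits_pair_iff.2 fun t ht => ?_, ?_⟩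
  · exact add_notMem_twoSided (hb i) (hbc i) (fun s hs t ht => hs.add_ne ht (hb i))
      (not_not.1 ht)
  -- `Y` meets `[-N, N]` in at least `(2N + 2 - c) / (card ι + 1)` cells once `N ≥ c`
  refine lowerDensity_le_of_eventually (C := (c - 1) / (Nat.card ι + 1)) ?_
  filter_upwards [eventually_ge_atTop c] with N hcN
  have hN := le_mul_ncard_greedyEmpty b N
  have hNc := le_mul_ncard_greedyEmpty b (N - c)
  have hY := ncard_add_ncard_le_ncard_twoSided_inter_Icc {t | GreedyEmpty b t} hc hcN
  have hsplit := ncard_inter_Icc_add_ncard_compl_inter_Icc Y N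
  generalize Nat.card ι = k at *
  generalize ({t | GreedyEmpty b t} ∩ Iic N).ncard = A at *
  generalize ({t | GreedyEmpty b t} ∩ Iic (N - c)).ncard = B at *
  generalize (Y ∩ Icc (-(N : ℤ)) N).ncard = P at *
  generalize (Yᶜ ∩ Icc (-(N : ℤ)) N).ncard = Q at *
  have hk : (0 : ℝ) < k + 1 := by positivity
  rw [div_mul_eq_mul_div, ← add_div, le_div_iff₀ hk]
  have hN' : (N : ℝ) + 1 ≤ (k + 1) * A := by exact_mod_cast hN
  have hNc' : ((N - c : ℕ) : ℝ) + 1 ≤ (k + 1) * B := by exact_mod_cast hNc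
  have hY' : (A : ℝ) + B ≤ P := by exact_mod_cast hY
  have hsplit' : (P : ℝ) + Q = 2 * N + 1 := by exact_mod_cast hsplit
  rw [Nat.cast_sub hcN] at hNc'
  nlinarith [mul_le_mul_of_nonneg_left hY' hk.le]

lemma ncard_inter_Icc_mul_le {Y : Set ℤ} {m : ℤ} (hm : 0 < m)
    (hY : ∀ y ∈ Y, ∀ z ∈ Y, y < z → y + m ≤ z) {a b : ℤ} (hab : a ≤ b) :
    (Y ∩ Icc a b).ncard * m ≤ b - a + m := by
  have hmono : StrictMonoOn (fun y => (y - a) / m) Y := fun y hy z hz hyz =>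
    calc (y - a) / m < (y - a) / m + 1 := lt_add_one _
      _ = (y - a + 1 * m) / m := (Int.add_mul_ediv_right _ _ hm.ne').symm
      _ ≤ (z - a) / m := Int.ediv_le_ediv hm (by linarith [hY y hy z hz hyz])
  have hcard : (Y ∩ Icc a b).ncard ≤ (Icc 0 ((b - a) / m)).ncard :=
    ncard_le_ncard_of_injOn _
      (fun y ⟨_, hya, hyb⟩ => ⟨Int.ediv_nonneg (by omega) hm.le, Int.ediv_le_ediv hm (by omega)⟩)
      (hmono.injOn.mono inter_subset_left)
  rw [← Finset.coe_Icc 0, ncard_coe_finset, Int.card_Icc, sub_zero] at hcard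
  have hq : 0 ≤ (b - a) / m := Int.ediv_nonneg (by omega) hm.le
  calc (Y ∩ Icc a b).ncard * m ≤ ((b - a) / m + 1) * m := by
        gcongr; omega
    _ = (b - a) / m * m + m := by ring
    _ ≤ b - a + m := by linarith [Int.ediv_mul_le (b - a) hm.ne']

lemma add_succ_le_of_hits {X : Set ℤ} {m : ℕ}
    (hX : ∀ k : ℕ, 0 < k → k ≤ m → Hits X {0, (k : ℤ)}) {y z : ℤ} (hy : y ∉ X) (hz : z ∉ X)
    (hyz : y < z) : y + (m + 1) ≤ z := by
  by_contra! h
  have := hits_pair_iff.1 (hX (z - y).toNat (by omega) (by omega)) y hy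
  rw [Int.toNat_of_nonneg (by omega), add_sub_cancel] at this
  exact hz this

lemma le_lowerDensity_of_hits {X : Set ℤ} {m : ℕ}
    (hX : ∀ k : ℕ, 0 < k → k ≤ m → Hits X {0, (k : ℤ)}) :
    (m : ℝ) / (m + 1) ≤ lowerDensity X := by
  refine le_lowerDensity_of_eventually (C := m / (m + 1)) (Eventually.of_forall fun N => ?_)
  have hgap := ncard_inter_Icc_mul_le (Y := Xᶜ) (m := m + 1) (by positivity)
    (fun y hy z hz => add_succ_le_of_hits hX hy hz) (a := -N) (b := N) (by omega)
  have hsplit := ncard_inter_Icc_add_ncard_compl_inter_Icc X N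
  generalize (X ∩ Icc (-(N : ℤ)) N).ncard = P at *
  generalize (Xᶜ ∩ Icc (-(N : ℤ)) N).ncard = Q at *
  have hm : (0 : ℝ) < m + 1 := by positivity
  rw [div_mul_eq_mul_div, ← sub_div, div_le_iff₀ hm]
  have hgap' : (Q : ℝ) * (m + 1) ≤ 2 * N + m + 1 := by
    have : ((Q * (m + 1) : ℤ) : ℝ) ≤ ((N - -N + (m + 1) : ℤ) : ℝ) := by exact_mod_cast hgap
    push_cast at this
    linarith
  have hsplit' : (P : ℝ) + Q = 2 * N + 1 := by exact_mod_cast hsplit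
  nlinarith

lemma piercing_le_of_ncard_eq_two {ι : Type*} [Finite ι] (T : ι → Set ℤ)
    (hT : ∀ i, (T i).ncard = 2) :
    piercing {S | ∃ i, S = T i} ≤ Nat.card ι / (Nat.card ι + 1) := by
  have hpair : ∀ i, ∃ u v : ℤ, u < v ∧ T i = {u, v} := fun i => by
    obtain ⟨u, v, huv, h⟩ := ncard_eq_two.1 (hT i)
    rcases huv.lt_or_gt with h' | h'
    · exact ⟨u, v, h', h⟩
    · exact ⟨v, u, h', h.trans (pair_comm u v)⟩
  choose u v huv hT using hpair
  obtain ⟨X, hX, hXd⟩ :=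
    exists_hits_lowerDensity_le (fun i => v i - u i) fun i => sub_pos.2 (huv i)
  refine (piercing_le_lowerDensity ?_).trans hXd
  rintro _ ⟨i, rfl⟩
  have := (hX i).image_add (u i)
  rwa [image_pair, add_zero, add_sub_cancel, ← hT i] at this

lemma le_piercing_consecutive (n : ℕ) :
    (n : ℝ) / (n + 1) ≤ piercing {S | ∃ i : Fin n, S = {0, (i : ℤ) + 1}} := by
  refine le_piercing (by rintro _ ⟨i, rfl⟩; exact insert_nonempty _ _)
    fun X hX => le_lowerDensity_of_hits fun k hk hkn => ?_
  convert hX _ ⟨⟨k - 1, by omega⟩, rfl⟩ using 3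
  push_cast
  omega

theorem stmt7_general (n : ℕ) (a : Fin n → ℤ) (hpos : ∀ i, 0 < a i) :
    piercing {S : Set ℤ | ∃ i, S = ({0, a i} : Set ℤ)} ≤ n / (n + 1) ∧
    IsLUB {x : ℝ | ∃ T : Fin n → Set ℤ, (∀ i, (T i).ncard = 2) ∧
      x = piercing {S | ∃ i, S = T i}} ((n : ℝ) / (n + 1)) := by
  have hle (T : Fin n → Set ℤ) (hT : ∀ i, (T i).ncard = 2) :
      piercing {S | ∃ i, S = T i} ≤ n / (n + 1) := by
    simpa using piercing_le_of_ncard_eq_two T hT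
  refine ⟨hle _ fun i => ncard_pair (hpos i).ne, ?_, fun y hy => ?_⟩
  · rintro _ ⟨T, hT, rfl⟩
    exact hle T hT
  · exact (le_piercing_consecutive n).trans
      (hy ⟨_, fun i => ncard_pair (by positivity : (0 : ℤ) < i + 1).ne, rfl⟩)

theorem stmt7 (n : ℕ) (hn : 0 < n) (a : Fin n → ℤ) (hpos : ∀ i, 0 < a i)
    (hmono : StrictMono a) :
    piercing {S : Set ℤ | ∃ i, S = ({0, a i} : Set ℤ)} ≤ n / (n + 1) ∧
    IsLUB {x : ℝ | ∃ T : Fin n → Set ℤ, (∀ i, (T i).ncard = 2) ∧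
      x = piercing {S | ∃ i, S = T i}} ((n : ℝ) / (n + 1)) :=
  stmt7_general n a hpos
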